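/- arXiv:0704.2749 — 7 statements merged into one kernel-verified Lean document; each statement's English description precedes it below -/
import Mathlib

section
/- Let n > 2 and let (G,f) be an n-ary groupoid. Then (G,f) is an n-ary group if and only if at least one of the following conditions holds: (a) f satisfies the (1,2)-associative law and the equation f(x_1,…,x_{i−1},z,x_{i+1},…,x_n) = x_0 is solvable at the place i = n and uniquely solvable at the place i = 1; (b) f satisfies the (n−1,n)-associative law and the equation is solvable at the place i = 1 and uniquely solvable at the place i = n; (c) f satisfies the (i,i+1)-associative law for some i ∈ {2,…,n−2} and the equation is uniquely solvable at the place i and at some place j > i. -/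
section NAry

variable {G : Type*}

/-- The result of substituting the "inner" application of `f` at 0-based position `i`
into the sequence `x` of `2n-1` arguments (indexed by naturals). -/
def applyAt (n : ℕ) (f : (Fin n → G) → G) (x : ℕ → G) (i : ℕ) : G :=
  f fun j => if (j : ℕ) < i then x (j : ℕ)
    else if (j : ℕ) = i then f (fun t => x (i + (t : ℕ)))
    else x ((j : ℕ) + n - 1)

/-- `(i+1,j+1)`-associativity (0-based positions `i` and `j`). -/
def IsAssocAt (n : ℕ) (f : (Fin n → G) → G) (i j : ℕ) : Prop :=
  ∀ x : ℕ → G, applyAt n f x i = applyAt n f x j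

/-- `f` is associative: all the `(i,j)`-associative laws hold. -/
def IsNAssoc (n : ℕ) (f : (Fin n → G) → G) : Prop :=
  ∀ i j : ℕ, i < n → j < n → IsAssocAt n f i j

/-- The equation `f(x₁,…,x_{i}, z, x_{i+2},…,x_n) = x₀` is uniquely solvable at the
0-based place `i`. -/
def IsUSolv (n : ℕ) (f : (Fin n → G) → G) (i : ℕ) : Prop :=
  ∀ (x : Fin n → G) (x₀ : G), ∃! z : G, f (fun m => if (m : ℕ) = i then z else x m) = x₀

/-- The equation `f(x₁,…,x_{i}, z, x_{i+2},…,x_n) = x₀` is solvable at the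
0-based place `i`. -/
def IsSolv (n : ℕ) (f : (Fin n → G) → G) (i : ℕ) : Prop :=
  ∀ (x : Fin n → G) (x₀ : G), ∃ z : G, f (fun m => if (m : ℕ) = i then z else x m) = x₀

/-- An `n`-ary group: associative and uniquely solvable at every place. -/
def IsNAryGroup (n : ℕ) (f : (Fin n → G) → G) : Prop :=
  IsNAssoc n f ∧ ∀ i : ℕ, i < n → IsUSolv n f i

/-- `bar` is the skew-element operation: `f(x,…,x, bar x) = x` (with `n-1` copies of `x`). -/
def IsSkewOf (n : ℕ) (f : (Fin n → G) → G) (bar : G → G) : Prop :=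
  ∀ x : G, f (fun m => if (m : ℕ) = n - 1 then bar x else x) = x

end NAry

/-!
Cancellation at a place `r` together with the adjacent associative law at `r` propagates
adjacent associativity upwards: put both sides of the law at position `k + 1` into a padding
word at place `r` and shift the bracket with the law at `r`; the inner words become the two sides
of the law at position `k`, and cancelling at `r` concludes. Reversing the order of the arguments
exchanges the places `i` and `n - 1 - i`, which turns this into downward propagation, and in
general turns every statement about the last place into one about the first.

Once `f` is associative, solvability at the two ends gives right neutral sequences, hence left
inverses of `z ↦ f(z, c)`, hence cancellation at the ends; reassociating then moves solvability
and cancellation from the ends to every place (Post). Solvability at an inner place reaches the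
ends by extending a solution one argument at a time.
-/

namespace NAry

open List Function

variable {G : Type*} {n : ℕ}

def seg (x : ℕ → G) (s l : ℕ) : List G := (range' s l).map x

lemma length_seg (x : ℕ → G) (s l : ℕ) : (seg x s l).length = l := by simp [seg]

lemma getD_seg (x : ℕ → G) {s l t : ℕ} (d : G) (h : t < l) :
    (seg x s l).getD t d = x (s + t) := by
  simp [seg, getD_eq_getElem?_getD, h]

lemma seg_succ (x : ℕ → G) (s l : ℕ) : seg x s (l + 1) = x s :: seg x (s + 1) l := by
  simp [seg, range'_succ]

lemma seg_concat (x : ℕ → G) (s l : ℕ) : seg x s (l + 1) = seg x s l ++ [x (s + l)] := by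
  simp [seg, range'_concat]

lemma getD_append_cons (a c : List G) (z d : G) (m : ℕ) :
    (a ++ z :: c).getD m d = if m < a.length then a.getD m d
      else if m = a.length then z else c.getD (m - a.length - 1) d := by
  split_ifs with h₁ h₂
  · exact getD_append _ _ _ _ h₁
  · subst h₂; simp
  · rw [getD_append_right _ _ _ _ (by omega), show m - a.length = m - a.length - 1 + 1 by omega]
    rfl

def revOp (f : (Fin n → G) → G) : (Fin n → G) → G := fun x => f (x ∘ Fin.rev)

section

variable {f : (Fin n → G) → G}

lemma revOp_revOp : revOp (revOp f) = f := by
  funext x; simp [revOp, Function.comp_def]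

lemma isAssocAt_trans {i j k : ℕ} (hij : IsAssocAt n f i j)
    (hjk : IsAssocAt n f j k) : IsAssocAt n f i k :=
  fun x => (hij x).trans (hjk x)

lemma isNAssoc_of_isAssocAt_succ (h : ∀ k, k + 2 ≤ n → IsAssocAt n f k (k + 1)) :
    IsNAssoc n f := by
  have hle : ∀ i j, i ≤ j → j < n → IsAssocAt n f i j := by
    intro i j hij hjn
    induction j, hij using Nat.le_induction with
    | base => exact fun _ => rfl
    | succ j _ ih => exact isAssocAt_trans (ih (by omega)) (h j (by omega))
  intro i j hi hj
  rcases le_total i j with hij | hji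
  · exact hle i j hij hj
  · exact fun x => (hle j i hji hi x).symm

lemma isNAryGroup_of_isEmpty [IsEmpty G] (hn : 0 < n) : IsNAryGroup n f :=
  ⟨fun _ _ _ _ x => isEmptyElim (x 0), fun _ _ x => isEmptyElim (x ⟨0, hn⟩)⟩

end

variable [Inhabited G]

/-- Missing entries of `w` are read as `default`, entries past the `n`-th are ignored. -/
def evalList (f : (Fin n → G) → G) (w : List G) : G := f fun j => w.getD j default

/-- The `(k+1, k+2)`-associative law of the paper (places are 0-based here). -/
def AdjAssocAt (f : (Fin n → G) → G) (k : ℕ) : Prop :=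
  ∀ (a : List G) (x : G) (b : List G) (y : G) (c : List G),
    a.length = k → b.length + 1 = n → a.length + c.length + 2 = n →
      evalList f (a ++ evalList f (x :: b) :: y :: c) =
        evalList f (a ++ x :: evalList f (b ++ [y]) :: c)

def AdjAssoc (f : (Fin n → G) → G) : Prop :=
  ∀ k, k + 2 ≤ n → AdjAssocAt f k

def CancelAt (f : (Fin n → G) → G) (i : ℕ) : Prop :=
  ∀ a c : List G, a.length = i → a.length + c.length + 1 = n →
    Injective fun z => evalList f (a ++ z :: c)

def SolvAt (f : (Fin n → G) → G) (i : ℕ) : Prop :=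
  ∀ a c : List G, a.length = i → a.length + c.length + 1 = n →
    Surjective fun z => evalList f (a ++ z :: c)

variable {f : (Fin n → G) → G}

lemma seg_getD_eq (L l₁ l₂ l₃ : List G) {s l : ℕ} (h : L = l₁ ++ l₂ ++ l₃)
    (hs : l₁.length = s) (hl : l₂.length = l) : seg (fun m => L.getD m default) s l = l₂ := by
  subst h hs hl
  refine ext_getElem (length_seg _ _ _) fun t ht _ => ?_
  simp only [seg, getElem_map, getElem_range', one_mul]
  rw [append_assoc, getD_append_right _ _ _ _ (by omega), Nat.add_sub_cancel_left,
    getD_append _ _ _ _ (by simpa [seg] using ht), getD_eq_getElem]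

lemma applyAt_eq_evalList (x : ℕ → G) {i : ℕ} (hi : i < n) :
    applyAt n f x i =
      evalList f (seg x 0 i ++ evalList f (seg x i n) :: seg x (i + n) (n - 1 - i)) := by
  have hinner : evalList f (seg x i n) = f fun t => x (i + t) := by
    unfold evalList; congr; funext t; exact getD_seg x _ t.isLt
  rw [hinner]
  unfold applyAt evalList
  congr; funext j
  rw [getD_append_cons, length_seg]
  split_ifs with h₁ h₂
  · rw [getD_seg x _ h₁, zero_add]
  · rfl
  · rw [getD_seg x _ (by omega)]; congr 1; omega

lemma adjAssocAt_of_isAssocAt {k : ℕ} (h : IsAssocAt n f k (k + 1)) : AdjAssocAt f k := by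
  intro a x b y c ha hb hac
  have := h fun m => (a ++ x :: b ++ y :: c).getD m default
  rw [applyAt_eq_evalList _ (by omega), applyAt_eq_evalList _ (by omega)] at this
  rwa [seg_getD_eq (s := 0) (l := k) _ [] a (x :: b ++ y :: c) (by simp) rfl ha,
    seg_getD_eq (s := k) (l := n) _ a (x :: b) (y :: c) rfl ha (by grind),
    seg_getD_eq (s := k + n) (l := n - 1 - k) _ (a ++ x :: b) (y :: c) [] (by simp)
      (by grind) (by grind),
    seg_getD_eq (s := 0) (l := k + 1) _ [] (a ++ [x]) (b ++ y :: c) (by simp) rfl (by grind),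
    seg_getD_eq (s := k + 1) (l := n) _ (a ++ [x]) (b ++ [y]) c (by simp) (by grind)
      (by grind),
    seg_getD_eq (s := k + 1 + n) (l := n - 1 - (k + 1)) _ (a ++ x :: b ++ [y]) c [] (by simp)
      (by grind) (by omega), append_assoc, singleton_append] at this

lemma isAssocAt_of_adjAssocAt {k : ℕ} (h : AdjAssocAt f k) (hk : k + 2 ≤ n) :
    IsAssocAt n f k (k + 1) := by
  intro x
  obtain ⟨m, rfl⟩ : ∃ m, n = k + m + 2 := ⟨n - k - 2, by omega⟩
  rw [applyAt_eq_evalList _ (by omega), applyAt_eq_evalList _ (by omega)]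
  have e₁ : seg x k (k + m + 2) = x k :: seg x (k + 1) (k + m + 1) := seg_succ ..
  have e₂ : seg x (k + (k + m + 2)) (k + m + 2 - 1 - k) =
      x (2 * k + m + 2) :: seg x (2 * k + m + 3) m := by
    rw [show k + m + 2 - 1 - k = m + 1 by omega, seg_succ]; congr 1 <;> congr 1 <;> omega
  have e₃ : seg x (k + 1) (k + m + 2) = seg x (k + 1) (k + m + 1) ++ [x (2 * k + m + 2)] := by
    rw [seg_concat]; congr 3; omega
  have e₄ : seg x (k + 1 + (k + m + 2)) (k + m + 2 - 1 - (k + 1)) = seg x (2 * k + m + 3) m := by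
    congr 1 <;> omega
  rw [e₁, e₂, e₃, e₄, seg_concat x 0 k, zero_add, append_assoc, singleton_append]
  exact h _ _ _ _ _ (length_seg ..) (by simp [length_seg]) (by simp [length_seg])

lemma evalList_append_cons (a c : List G) (z : G) :
    evalList f (a ++ z :: c) =
      f fun m => if (m : ℕ) = a.length then z else (a ++ default :: c).getD m default := by
  unfold evalList
  congr; funext m
  simp only [getD_append_cons]
  split_ifs <;> first | rfl | omega

lemma evalList_take_cons_drop (x : Fin n → G) (z : G) {i : ℕ} (hi : i < n) :
    evalList f (take i (ofFn x) ++ z :: drop (i + 1) (ofFn x)) =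
      f fun m => if (m : ℕ) = i then z else x m := by
  unfold evalList
  congr; funext m
  rw [getD_append_cons, length_take, length_ofFn, min_eq_left hi.le]
  split_ifs with h₁ h₂ h₃ <;> try omega
  · simp [getD_eq_getElem?_getD, h₁]
  · rfl
  · simp [getD_eq_getElem?_getD, show i + 1 + (m - i - 1) = m by omega]

lemma cancelAt_of_isUSolv {i : ℕ} (h : IsUSolv n f i) : CancelAt f i := by
  rintro a c rfl - z z' hz
  simp only [evalList_append_cons] at hz
  exact (h _ _).unique hz rfl

lemma solvAt_of_isSolv {i : ℕ} (h : IsSolv n f i) : SolvAt f i := by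
  rintro a c rfl - b
  simpa only [evalList_append_cons] using h _ b

lemma solvAt_of_isUSolv {i : ℕ} (h : IsUSolv n f i) : SolvAt f i :=
  solvAt_of_isSolv fun x x₀ => (h x x₀).exists

lemma isUSolv_of_cancelAt_of_solvAt {i : ℕ} (hi : i < n) (hc : CancelAt f i) (hs : SolvAt f i) :
    IsUSolv n f i := by
  intro x x₀
  have ha : (take i (ofFn x)).length = i := by grind
  have hac : (take i (ofFn x)).length + (drop (i + 1) (ofFn x)).length + 1 = n := by grind
  simp only [← evalList_take_cons_drop x _ hi]
  obtain ⟨z, hz⟩ := hs _ _ ha hac x₀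
  exact ⟨z, hz, fun z' hz' => hc _ _ ha hac (hz'.trans hz.symm)⟩

lemma evalList_revOp {w : List G} (hw : w.length = n) :
    evalList (revOp f) w = evalList f w.reverse := by
  unfold evalList revOp
  congr; funext j
  rw [Function.comp_apply, getD_reverse _ (by omega), Fin.val_rev, hw]
  congr 1; omega

lemma AdjAssocAt.revOp {k j : ℕ} (h : AdjAssocAt f k) (hkj : k + j + 2 = n) :
    AdjAssocAt (revOp f) j := by
  intro a x b y c ha hb hac
  have := h c.reverse y b.reverse x a.reverse (by grind) (by simpa) (by grind)
  simp (disch := grind) only [evalList_revOp, reverse_append, reverse_cons,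
    append_assoc, singleton_append]
  exact this.symm

lemma CancelAt.revOp {i j : ℕ} (h : CancelAt f i) (hij : i + j + 1 = n) :
    CancelAt (revOp f) j := by
  intro a c ha hac z z' hz
  simp (disch := grind) only [evalList_revOp, reverse_append, reverse_cons,
    append_assoc, singleton_append] at hz
  exact h c.reverse a.reverse (by grind) (by grind) hz

lemma SolvAt.revOp {i j : ℕ} (h : SolvAt f i) (hij : i + j + 1 = n) :
    SolvAt (revOp f) j := by
  intro a c ha hac b
  obtain ⟨z, hz⟩ := h c.reverse a.reverse (by grind) (by grind) b
  refine ⟨z, ?_⟩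
  simp (disch := grind) only [evalList_revOp, reverse_append, reverse_cons,
    append_assoc, singleton_append]
  exact hz

lemma AdjAssocAt.succ {r k : ℕ} (hk : AdjAssocAt f k) (hr : AdjAssocAt f r)
    (hc : CancelAt f r) (hrk : r ≤ k) : AdjAssocAt f (k + 1) := by
  intro a x b y c ha hb hac
  obtain ⟨a₀, a', rfl⟩ := exists_of_length_succ a ha
  simp only [length_cons, Nat.add_right_cancel_iff] at ha hac
  apply hc (replicate r default) (replicate (n - 1 - r) default) (by simp) (by grind)
  simp only [show n - 1 - r = n - 2 - r + 1 by omega, replicate_succ, cons_append]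
  rw [hr _ _ _ _ _ (by simp) (by grind) (by grind),
    hr _ _ _ _ _ (by simp) (by grind) (by grind)]
  simpa using congrArg
    (fun v => evalList f (replicate r default ++ a₀ :: v :: replicate (n - 2 - r) default))
    (hk a' x b y (c ++ [default]) ha hb (by grind))

lemma AdjAssocAt.pred {q k : ℕ} (hk : AdjAssocAt f (k + 1)) (hq : AdjAssocAt f q)
    (hc : CancelAt f (q + 1)) (hkq : k < q) (hqn : q + 2 ≤ n) : AdjAssocAt f k := by
  have h := (hk.revOp (j := n - 3 - k) (by omega)).succ (hq.revOp (j := n - 2 - q) (by omega))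
    (hc.revOp (by omega)) (by omega)
  simpa only [revOp_revOp] using h.revOp (j := k) (by omega)

lemma AdjAssocAt.of_le {r k : ℕ} (hr : AdjAssocAt f r) (hc : CancelAt f r) (hrk : r ≤ k) :
    AdjAssocAt f k := by
  induction k, hrk using Nat.le_induction with
  | base => exact hr
  | succ k hrk ih => exact ih.succ hr hc hrk

lemma AdjAssocAt.of_ge {q k : ℕ} (hq : AdjAssocAt f q) (hc : CancelAt f (q + 1))
    (hqn : q + 2 ≤ n) (hkq : k ≤ q) : AdjAssocAt f k := by
  induction hkq using Nat.decreasingInduction with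
  | self => exact hq
  | of_succ k hkq ih => exact ih.pred hq hc hkq hqn

lemma AdjAssoc.evalList_evalList (h : AdjAssoc f) {a b c d e : List G}
    (hbd : b.length = d.length) (hbc : b.length + c.length = n)
    (habe : a.length + b.length + e.length + 1 = n) :
    evalList f (a ++ evalList f (b ++ c) :: (d ++ e)) =
      evalList f (a ++ b ++ evalList f (c ++ d) :: e) := by
  induction b generalizing a c d with
  | nil => obtain rfl := eq_nil_of_length_eq_zero hbd.symm; simp
  | cons x b ih =>
    obtain ⟨y, d, rfl⟩ := exists_of_length_succ d hbd.symm
    simp only [length_cons, Nat.add_right_cancel_iff] at hbd hbc habe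
    rw [cons_append, cons_append, h a.length (by omega) a x (b ++ c) y (d ++ e) rfl (by grind)
      (by grind)]
    simpa using ih (a := a ++ [x]) (c := c ++ [y]) hbd (by grind) (by grind)

lemma AdjAssoc.revOp (h : AdjAssoc f) : AdjAssoc (revOp f) :=
  fun k hk => (h (n - 2 - k) (by omega)).revOp (by omega)

lemma AdjAssoc.evalList_cons_eq_self (h : AdjAssoc f) (hn : 2 ≤ n) (hs : SolvAt f 0) {g : G}
    {e : List G} (he : e.length + 1 = n) (hg : evalList f (g :: e) = g) (x : G) :
    evalList f (x :: e) = x := by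
  obtain ⟨z, rfl⟩ := hs [] (replicate (n - 2) default ++ [g]) rfl (by grind) x
  have := h.evalList_evalList (a := []) (b := z :: replicate (n - 2) default) (c := [g]) (d := e)
    (e := []) (by grind) (by grind) (by grind)
  simpa [hg] using this

lemma AdjAssoc.cancelAt_zero (h : AdjAssoc f) (hn : 2 ≤ n) (hs₀ : SolvAt f 0)
    (hs₁ : SolvAt f (n - 1)) : CancelAt f 0 := by
  intro a c ha hac
  obtain rfl := eq_nil_of_length_eq_zero ha
  obtain ⟨c, y, rfl⟩ : ∃ c' y, c = c' ++ [y] :=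
    ⟨c.dropLast, c.getLast (by rintro rfl; grind), (dropLast_append_getLast _).symm⟩
  simp only [length_nil, length_append, length_singleton] at hac
  obtain ⟨e, he⟩ := hs₁ (default :: c) [] (by grind) (by grind) default
  have hneutral := h.evalList_cons_eq_self hn hs₀ (e := c ++ [e]) (by grind) (by simpa using he)
  obtain ⟨k, hk⟩ := hs₁ (y :: replicate (n - 2) default) [] (by grind) (by grind) e
  refine LeftInverse.injective (g := fun u => evalList f (u :: replicate (n - 2) default ++ [k]))
    fun x => ?_
  have := h.evalList_evalList (a := []) (b := x :: c) (c := [y])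
    (d := replicate (n - 2) default ++ [k]) (e := []) (by grind) (by grind) (by grind)
  simp only [nil_append, cons_append, append_nil] at this hk ⊢
  rw [this, hk]
  exact hneutral x

lemma AdjAssoc.solvAt (h : AdjAssoc f) (hs₀ : SolvAt f 0) (hs₁ : SolvAt f (n - 1)) (i : ℕ) :
    SolvAt f i := by
  rintro a c rfl hac b
  obtain ⟨u, hu⟩ := hs₀ [] (replicate a.length default ++ c) rfl (by grind) b
  obtain ⟨s, hs⟩ := hs₁ (a ++ replicate (n - 1 - a.length) default) [] (by grind)
    (by grind) u
  refine ⟨evalList f (replicate (n - 1 - a.length) default ++ s :: replicate a.length default),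
    ?_⟩
  have := h.evalList_evalList (a := []) (b := a) (c := replicate (n - 1 - a.length) default ++ [s])
    (d := replicate a.length default) (e := c) (by simp) (by grind) (by grind)
  simp only [nil_append, append_assoc, singleton_append] at this hs hu
  dsimp only
  rw [← this, hs, hu]

lemma AdjAssoc.cancelAt (h : AdjAssoc f) (hc₀ : CancelAt f 0) (hc₁ : CancelAt f (n - 1))
    (i : ℕ) :
    CancelAt f i := by
  rintro a c rfl hac u v huv
  have key : ∀ z, evalList f (replicate c.length default ++ evalList f (a ++ z :: c) ::
      replicate a.length default) = evalList f ((replicate c.length default ++ a) ++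
        [evalList f (z :: c ++ replicate a.length default)]) := fun z => by
    simpa using h.evalList_evalList (a := replicate c.length default) (b := a) (c := z :: c)
      (d := replicate a.length default) (e := []) (by simp) (by grind) (by grind)
  have h₁ := congrArg (fun w => evalList f (replicate c.length default ++ w ::
    replicate a.length default)) huv
  simp only [key] at h₁
  exact hc₀ [] (c ++ replicate a.length default) rfl (by grind)
    (hc₁ _ [] (by grind) (by grind) h₁)

lemma AdjAssoc.cancelAt_solvAt (h : AdjAssoc f) (hn : 2 ≤ n) (hs₀ : SolvAt f 0)
    (hs₁ : SolvAt f (n - 1)) (i : ℕ) : CancelAt f i ∧ SolvAt f i := by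
  have hc₁ : CancelAt f (n - 1) := by
    have := h.revOp.cancelAt_zero hn (hs₁.revOp (by omega)) (hs₀.revOp (by omega))
    simpa only [revOp_revOp] using this.revOp (j := n - 1) (by omega)
  exact ⟨h.cancelAt (h.cancelAt_zero hn hs₀ hs₁) hc₁ i, h.solvAt hs₀ hs₁ i⟩

lemma AdjAssoc.exists_append_eq (h : AdjAssoc f) {p : ℕ} (hp : 1 ≤ p) (hpn : p < n)
    (hs : SolvAt f p) (a : List G) (ha : a.length < n) (b : G) :
    ∃ w : List G, a.length + w.length = n ∧ evalList f (a ++ w) = b := by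
  induction a using reverseRecOn generalizing b with
  | nil =>
    obtain ⟨z, hz⟩ := hs (replicate p default) (replicate (n - 1 - p) default) (by simp)
      (by grind) b
    exact ⟨replicate p default ++ z :: replicate (n - 1 - p) default, by grind, hz⟩
  | append_singleton a x ih =>
    simp only [length_append, length_singleton] at ha
    obtain ⟨w, hw, rfl⟩ := ih (by omega) b
    obtain ⟨y, y', w, rfl⟩ : ∃ y y' w', w = y :: y' :: w' := by
      match w, hw with
      | y :: y' :: w', _ => exact ⟨y, y', w', rfl⟩
      | [], hw | [_], hw => grind
    simp only [length_cons] at hw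
    obtain ⟨s, hs⟩ := hs (x :: replicate (p - 1) default) (replicate (n - 1 - p) default)
      (by grind) (by grind) y
    subst hs
    set v := replicate (p - 1) default ++ s :: replicate (n - 1 - p) default
    refine ⟨evalList f (v ++ [y']) :: w, by grind, ?_⟩
    have := h a.length (by omega) a x v y' w rfl (by grind) (by omega)
    simpa using this.symm

lemma AdjAssoc.solvAt_last (h : AdjAssoc f) {p : ℕ} (hp : 1 ≤ p) (hpn : p < n)
    (hs : SolvAt f p) : SolvAt f (n - 1) := by
  rintro a c ha hac b
  obtain rfl : c = [] := eq_nil_of_length_eq_zero (by omega)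
  obtain ⟨w, hw, hwb⟩ := h.exists_append_eq hp hpn hs a (by omega) b
  match w, hw with
  | [z], _ => exact ⟨z, hwb⟩
  | [], hw | _ :: _ :: _, hw => grind

lemma AdjAssoc.solvAt_zero (h : AdjAssoc f) {p : ℕ} (hpn : p + 2 ≤ n) (hs : SolvAt f p) :
    SolvAt f 0 := by
  have := h.revOp.solvAt_last (p := n - 1 - p) (by omega) (by omega) (hs.revOp (by omega))
  simpa only [revOp_revOp] using this.revOp (j := 0) (by omega)

lemma isNAryGroup_of_adjAssoc (hn : 2 ≤ n) (h : AdjAssoc f) (hs₀ : SolvAt f 0)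
    (hs₁ : SolvAt f (n - 1)) : IsNAryGroup n f :=
  ⟨isNAssoc_of_isAssocAt_succ fun k hk => isAssocAt_of_adjAssocAt (h k hk) hk,
    fun i hi => (h.cancelAt_solvAt hn hs₀ hs₁ i).elim (isUSolv_of_cancelAt_of_solvAt hi)⟩

end NAry

open NAry in
/-- Dudek–Głazek–Gleichgewicht, 1997.
An `n`-ary groupoid is an `n`-ary group iff one of the conditions (a), (b), (c) holds. -/
theorem nary_group_iff_axioms {G : Type*} (n : ℕ) (hn : 2 < n) (f : (Fin n → G) → G) :
    IsNAryGroup n f ↔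
      ((IsAssocAt n f 0 1 ∧ IsSolv n f (n - 1) ∧ IsUSolv n f 0) ∨
       (IsAssocAt n f (n - 2) (n - 1) ∧ IsSolv n f 0 ∧ IsUSolv n f (n - 1)) ∨
       (∃ i : ℕ, 2 ≤ i ∧ i ≤ n - 2 ∧ IsAssocAt n f (i - 1) i ∧ IsUSolv n f (i - 1) ∧
         ∃ j : ℕ, i < j ∧ j ≤ n ∧ IsUSolv n f (j - 1))) := by
  refine ⟨fun ⟨hA, hU⟩ => Or.inl ⟨hA 0 1 (by omega) (by omega),
    fun x x₀ => (hU (n - 1) (by omega) x x₀).exists, hU 0 (by omega)⟩, fun h => ?_⟩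
  cases isEmpty_or_nonempty G
  · exact isNAryGroup_of_isEmpty (by omega)
  inhabit G
  rcases h with ⟨ha, hs, hu⟩ | ⟨ha, hs, hu⟩ | ⟨i, hi, hin, ha, hu, j, hij, hjn, hu'⟩
  · have hA : AdjAssoc f := fun k _ =>
      (adjAssocAt_of_isAssocAt ha).of_le (cancelAt_of_isUSolv hu) k.zero_le
    exact isNAryGroup_of_adjAssoc hn.le hA (solvAt_of_isUSolv hu) (solvAt_of_isSolv hs)
  · have hc := cancelAt_of_isUSolv hu
    refine isNAryGroup_of_adjAssoc hn.le (fun k hk => ?_) (solvAt_of_isSolv hs)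
      (solvAt_of_isUSolv hu)
    rw [show n - 1 = n - 2 + 1 by omega] at ha hc
    exact (adjAssocAt_of_isAssocAt ha).of_ge hc (by omega) (by omega)
  · obtain ⟨p, rfl⟩ : ∃ p, i = p + 1 := ⟨i - 1, by omega⟩
    obtain ⟨q, rfl⟩ : ∃ q, j = q + 2 := ⟨j - 2, by omega⟩
    rw [Nat.add_sub_cancel] at ha hu
    rw [show q + 2 - 1 = q + 1 by omega] at hu'
    have hup : ∀ k, p ≤ k → AdjAssocAt f k := fun _ =>
      (adjAssocAt_of_isAssocAt ha).of_le (cancelAt_of_isUSolv hu)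
    have hA : AdjAssoc f := fun k _ => by
      rcases le_total p k with hpk | hkp
      · exact hup k hpk
      · exact (hup q (by omega)).of_ge (cancelAt_of_isUSolv hu') (by omega) (by omega)
    exact isNAryGroup_of_adjAssoc hn.le hA (hA.solvAt_zero (by omega) (solvAt_of_isUSolv hu))
      (hA.solvAt_last (by omega) (by omega) (solvAt_of_isUSolv hu))
end

section
/- Let n > 2. An n-ary semigroup (G,f) is an n-ary group if and only if for some k with 1 ≤ k ≤ n−2 and for all a_1,…,a_k ∈ G there exist elements x_{k+1},…,x_{n−1}, y_{k+1},…,y_{n−1} ∈ G such that f(a_1,…,a_k, x_{k+1},…,x_{n−1}, b) = b and f(b, y_{k+1},…,y_{n−1}, a_1,…,a_k) = b for all b ∈ G. -/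
/-!
Write `slot f c i z` for the value of `f` on the word `c` with `z` put in place `i`.
Absorbing blocks of length `k` by left local identities makes the last slot surjective, by
induction on the length of a prescribed prefix; mirroring (`reverse f` turns right local
identities into left ones) gives the first slot. With both end slots surjective, the binary
operation `(x, y) ↦ f(x, c₁, …, c_{n-2}, y)` has a left neutral element, which yields a left
inverse of every last slot, so end slots are injective. Middle slots are reassociated into end
slots. Conversely, in an `n`-ary group `f(a, …, a, z, b) = b` holds for every `b` as soon as it
holds for `b = a`.
-/

namespace NAry

open Function

variable {G : Type*} {n : ℕ}

def ev (f : (Fin n → G) → G) (w : ℕ → G) : G := f fun m => w m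

def slot (f : (Fin n → G) → G) (c : ℕ → G) (i : ℕ) (z : G) : G := ev f (update c i z)

variable {f : (Fin n → G) → G}

theorem ev_congr {w w' : ℕ → G} (h : ∀ t < n, w t = w' t) : ev f w = ev f w' :=
  congrArg f (funext fun m => h m m.isLt)

theorem slot_congr {c c' : ℕ → G} {i : ℕ} (h : ∀ t < n, t ≠ i → c t = c' t) :
    slot f c i = slot f c' i := by
  funext z
  refine ev_congr fun t ht => ?_
  by_cases hti : t = i
  · simp [hti]
  · simp [update_of_ne hti, h t ht hti]

theorem slot_self (c : ℕ → G) (i : ℕ) : slot f c i (c i) = ev f c := by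
  rw [slot, update_eq_self]

theorem slot_update_comm {c : ℕ → G} {i j : ℕ} (h : i ≠ j) (z w : G) :
    slot f (update c i z) j w = slot f (update c j w) i z := by
  rw [slot, slot, update_comm h]

theorem applyAt_eq_slot {x o w : ℕ → G} {i : ℕ}
    (ho : ∀ t < n, t ≠ i → o t = if t < i then x t else x (t + n - 1))
    (hw : ∀ s < n, w s = x (i + s)) :
    applyAt n f x i = slot f o i (ev f w) := by
  refine congrArg f (funext fun m => ?_)
  by_cases hmi : (m : ℕ) = i
  · simp only [hmi, lt_irrefl, if_false, if_true, update_self]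
    exact ev_congr fun s hs => (hw s hs).symm
  · rw [update_of_ne hmi, ho m m.isLt hmi]
    split_ifs <;> rfl

theorem _root_.IsNAssoc.slot_ev_eq (ha : IsNAssoc n f) {i j : ℕ} (hi : i < n) (hj : j < n)
    (x : ℕ → G) {o w o' w' : ℕ → G}
    (ho : ∀ t < n, t ≠ i → o t = if t < i then x t else x (t + n - 1))
    (hw : ∀ s < n, w s = x (i + s))
    (ho' : ∀ t < n, t ≠ j → o' t = if t < j then x t else x (t + n - 1))
    (hw' : ∀ s < n, w' s = x (j + s)) :
    slot f o i (ev f w) = slot f o' j (ev f w') :=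
  (applyAt_eq_slot ho hw).symm.trans ((ha i j hi hj x).trans (applyAt_eq_slot ho' hw'))

theorem _root_.IsNAssoc.slot_last_ev (ha : IsNAssoc n f) (hn : 0 < n) (p w : ℕ → G) :
    slot f p (n - 1) (ev f w) = slot f w 0 (slot f p (n - 1) (w 0)) := by
  refine ha.slot_ev_eq (by omega) hn (fun t => if t < n - 1 then p t else w (t - (n - 1)))
    ?_ ?_ ?_ ?_
  all_goals intro t ht; try intro hne
  all_goals (try simp only [update_apply]); split_ifs <;> first | rfl | omega | (congr 1; omega)

def reverse (f : (Fin n → G) → G) : (Fin n → G) → G := fun w => f (w ∘ Fin.rev)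

theorem ev_reverse (w : ℕ → G) : ev (reverse f) w = ev f fun t => w (n - 1 - t) :=
  congrArg f (funext fun m => by simp only [comp_apply, Fin.val_rev]; congr 1; omega)

theorem slot_reverse {i : ℕ} (hi : i < n) (c : ℕ → G) :
    slot (reverse f) c i = slot f (fun t => c (n - 1 - t)) (n - 1 - i) := by
  funext z
  refine (ev_reverse _).trans (ev_congr fun t ht => ?_)
  simp only [update_apply]
  split_ifs <;> first | rfl | omega

theorem forall_slot_reverse_iff (P : (G → G) → Prop) {i : ℕ} (hi : i < n) :
    (∀ c, P (slot (reverse f) c i)) ↔ ∀ c, P (slot f c (n - 1 - i)) := by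
  refine ⟨fun h c => ?_, fun h c => by rw [slot_reverse hi]; exact h _⟩
  convert h fun t => c (n - 1 - t) using 1
  rw [slot_reverse hi]
  exact slot_congr fun t ht _ => by congr 1; omega

theorem applyAt_reverse (x : ℕ → G) {i : ℕ} (hi : i < n) :
    applyAt n (reverse f) x i = applyAt n f (fun t => x (2 * n - 2 - t)) (n - 1 - i) := by
  refine congrArg f (funext fun m => ?_)
  simp only [comp_apply, Fin.val_rev]
  split_ifs <;> first
    | (congr 1; omega)
    | exact congrArg f (funext fun s => by simp only [comp_apply, Fin.val_rev]; congr 1; omega)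

theorem _root_.IsNAssoc.reverse (ha : IsNAssoc n f) : IsNAssoc n (reverse f) :=
  fun i j hi hj x => by
  rw [applyAt_reverse x hi, applyAt_reverse x hj]
  exact ha _ _ (by omega) (by omega) _

def LeftLocalIdentities (n k : ℕ) (f : (Fin n → G) → G) : Prop :=
  ∀ a : ℕ → G, ∃ x : ℕ → G, ∀ b : G,
    ev f (fun t => if t < k then a t else if t < n - 1 then x t else b) = b

def RightLocalIdentities (n k : ℕ) (f : (Fin n → G) → G) : Prop :=
  ∀ a : ℕ → G, ∃ y : ℕ → G, ∀ b : G,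
    ev f (fun t => if t = 0 then b else if t < n - k then y t else a (t - (n - k))) = b

theorem leftLocalIdentities_reverse_iff {k : ℕ} (hk : k < n) :
    LeftLocalIdentities n k (reverse f) ↔ RightLocalIdentities n k f := by
  constructor
  · intro h a
    obtain ⟨x, hx⟩ := h fun t => a (k - 1 - t)
    refine ⟨fun t => x (n - 1 - t), fun b =>
      (ev_congr fun t ht => ?_).trans ((ev_reverse _).symm.trans (hx b))⟩
    dsimp only
    split_ifs <;> first | rfl | omega | (congr 1; omega)
  · intro h a
    obtain ⟨y, hy⟩ := h fun t => a (k - 1 - t)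
    refine ⟨fun t => y (n - 1 - t), fun b =>
      (ev_reverse _).trans ((ev_congr fun t ht => ?_).trans (hy b))⟩
    dsimp only
    split_ifs <;> first | rfl | omega | (congr 1; omega)

theorem _root_.IsNAssoc.exists_ev_prefix_eq (ha : IsNAssoc n f) {k : ℕ} (hk : 1 ≤ k)
    (hL : LeftLocalIdentities n k f) :
    ∀ m < n, ∀ (c : ℕ → G) (b : G),
      ∃ u : ℕ → G, ev f (fun t => if t < m then c t else u t) = b := by
  intro m
  induction m using Nat.strong_induction_on with
  | _ m ih =>
  intro hm c b
  by_cases hmk : m ≤ k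
  · obtain ⟨x, hx⟩ := hL fun t => if t < m then c t else b
    refine ⟨fun t => if t < k then b else if t < n - 1 then x t else b,
      (ev_congr fun t ht => ?_).trans (hx b)⟩
    dsimp only
    split_ifs <;> first | rfl | omega
  -- a local identity absorbs `c (m - k), …, c (m - 1)`, reducing to a prefix of length `m - k`
  obtain ⟨u, hu⟩ := ih (m - k) (by omega) (by omega) c b
  obtain ⟨x, hx⟩ := hL fun t => c (m - k + t)
  set W : ℕ → G := fun t =>
    if t < m then c t else if t < m + n - 1 - k then x (t - (m - k)) else u (t - (n - 1))
  set o : ℕ → G := fun t => if t < m - k then c t else u t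
  set w : ℕ → G := fun s => if s < k then c (m - k + s) else if s < n - 1 then x s else u (m - k)
  set o' : ℕ → G := fun t => if t < m then c t else W (t + n - 1)
  set w' : ℕ → G := fun s => W (m + s)
  have key : slot f o (m - k) (ev f w) = slot f o' m (ev f w') := by
    refine ha.slot_ev_eq (by omega) hm W ?_ ?_ ?_ ?_
    all_goals intro t ht; try intro hne
    all_goals
      simp only [W, o, w, o', w'] <;> split_ifs <;> first | rfl | omega | (congr 1; omega)
  refine ⟨update o' m (ev f w'), ?_⟩
  calc ev f (fun t => if t < m then c t else update o' m (ev f w') t)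
      = slot f o' m (ev f w') := ev_congr fun t ht => by
        simp only [update_apply, o']
        split_ifs <;> first | rfl | omega
    _ = slot f o (m - k) (u (m - k)) := by rw [← key, hx]
    _ = b := (ev_congr fun t ht => by
        simp only [update_apply, o]
        split_ifs <;> first | rfl | omega | (congr 1; omega)).trans hu

theorem _root_.IsNAssoc.surjective_slot_last (ha : IsNAssoc n f) (hn : 0 < n) {k : ℕ}
    (hk : 1 ≤ k) (hL : LeftLocalIdentities n k f) (c : ℕ → G) :
    Surjective (slot f c (n - 1)) := fun b => by
  obtain ⟨u, hu⟩ := ha.exists_ev_prefix_eq hk hL (n - 1) (by omega) c b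
  refine ⟨u (n - 1), (ev_congr fun t ht => ?_).trans hu⟩
  simp only [update_apply]
  split_ifs <;> first | rfl | omega | (congr 1; omega)

theorem _root_.IsNAssoc.surjective_slot (ha : IsNAssoc n f)
    (h₀ : ∀ c : ℕ → G, Surjective (slot f c 0))
    (hlast : ∀ c : ℕ → G, Surjective (slot f c (n - 1))) {j : ℕ} (hj : j < n) (c : ℕ → G) :
    Surjective (slot f c j) := fun b => by
  -- put `z = f(d₀, …, d_{n-1})` into slot `j` and reassociate so that `d_{n-1-j}` sits in slot 0
  obtain ⟨t₀, ht₀⟩ := hlast (fun t => if t < j then c t else c 0) b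
  obtain ⟨δ, hδ⟩ := h₀ (fun s => if s ≤ j then c 0 else c s) t₀
  refine ⟨ev f (update (fun _ => c 0) (n - 1 - j) δ), ?_⟩
  rw [← ht₀, ← hδ]
  refine ha.slot_ev_eq hj (by omega)
    (fun t => if t < j then c t else if t = n - 1 then δ
      else if t < j + n then c 0 else c (t - (n - 1)))
    ?_ ?_ ?_ ?_
  all_goals intro t ht; try intro hne
  all_goals (try simp only [update_apply]); split_ifs <;> first | rfl | omega | (congr 1; omega)

theorem _root_.IsNAssoc.slot_last_ev_eq_self (ha : IsNAssoc n f) (hn : 0 < n) {p w : ℕ → G}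
    (hp : slot f p (n - 1) (w 0) = w 0) : slot f p (n - 1) (ev f w) = ev f w := by
  rw [ha.slot_last_ev hn, hp, slot_self]

theorem _root_.IsNAssoc.exists_left_neutral (ha : IsNAssoc n f) (hn : 1 < n)
    (h₀ : ∀ c : ℕ → G, Surjective (slot f c 0))
    (hlast : ∀ c : ℕ → G, Surjective (slot f c (n - 1))) (c : ℕ → G) :
    ∃ e : G, ∀ b : G, slot f (update c 0 e) (n - 1) b = b := by
  have h0 : (0 : ℕ) ≠ n - 1 := by omega
  obtain ⟨e, he⟩ := h₀ (update c (n - 1) (c 0)) (c 0)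
  refine ⟨e, fun b => ?_⟩
  obtain ⟨s, rfl⟩ := hlast c b
  refine ha.slot_last_ev_eq_self (by omega) ?_
  rwa [update_of_ne h0, slot_update_comm h0]

theorem _root_.IsNAssoc.injective_slot_last (ha : IsNAssoc n f) (hn : 1 < n)
    (h₀ : ∀ c : ℕ → G, Surjective (slot f c 0))
    (hlast : ∀ c : ℕ → G, Surjective (slot f c (n - 1))) (c : ℕ → G) :
    Injective (slot f c (n - 1)) := by
  have h0 : (0 : ℕ) ≠ n - 1 := by omega
  obtain ⟨e, he⟩ := ha.exists_left_neutral hn h₀ hlast c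
  obtain ⟨d, hd⟩ := h₀ (fun _ => c 0) e
  -- `slot f p (n - 1)` undoes `slot f c (n - 1)`, where `f(p₀, …, p_{n-2}, c₀) = e`
  set p := update (fun _ => c 0) 0 d
  have hp : slot f p (n - 1) (c 0) = e := by
    rw [← update_of_ne h0.symm d (fun _ => c 0), slot_self]
    exact hd
  refine LeftInverse.injective (g := slot f p (n - 1)) fun z => ?_
  have key := ha.slot_last_ev (by omega) p (update c (n - 1) z)
  rw [update_of_ne h0, hp, slot_update_comm h0.symm] at key
  exact key.trans (he z)

theorem _root_.IsNAssoc.injective_slot (ha : IsNAssoc n f)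
    (h₀ : ∀ c : ℕ → G, Injective (slot f c 0))
    (hlast : ∀ c : ℕ → G, Injective (slot f c (n - 1))) {j : ℕ} (hj : j < n) (c : ℕ → G) :
    Injective (slot f c j) := by
  -- `f(c₀, …, c₀, f(c₀, …, z, …, c_{n-1}), c₀, …) = f(c₀, …, c₀, c₀, …, c_{j-1}, f(z, c_{j+1}, …))`
  set o' : ℕ → G := fun t => if t < n - 1 - j then c 0 else c (t - (n - 1 - j))
  set w' : ℕ → G := fun s => if s < n - j then c (s + j) else c 0
  have key : ∀ z,
      slot f (fun _ => c 0) (n - 1 - j) (slot f c j z) = slot f o' (n - 1) (slot f w' 0 z) := by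
    intro z
    refine ha.slot_ev_eq (by omega) (by omega)
      (fun t => if t < n - 1 - j then c 0 else if t = n - 1 then z
        else if t < 2 * n - 1 - j then c (t - (n - 1 - j)) else c 0) ?_ ?_ ?_ ?_
    all_goals intro t ht; try intro hne
    all_goals
      (try simp only [update_apply, o', w']); split_ifs <;> first | rfl | omega | (congr 1; omega)
  intro z z' h
  exact h₀ w' (hlast o' (by rw [← key, ← key, h]))

theorem isUSolv_of_bijective_slot {i : ℕ} (h : ∀ c : ℕ → G, Bijective (slot f c i)) :
    IsUSolv n f i := fun x b => by
  have hx : ∀ z, f (fun m => if (m : ℕ) = i then z else x m) =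
      slot f (fun t => if ht : t < n then x ⟨t, ht⟩ else b) i z := fun z =>
    congrArg f (funext fun m => by by_cases hm : (m : ℕ) = i <;> simp [hm])
  simpa only [hx] using (h _).existsUnique b

theorem _root_.IsUSolv.surjective_slot {i : ℕ} (h : IsUSolv n f i) (c : ℕ → G) :
    Surjective (slot f c i) := fun b => by
  obtain ⟨z, hz, -⟩ := h (fun m => c m) b
  exact ⟨z, (congrArg f (funext fun m => by by_cases hm : (m : ℕ) = i <;> simp [hm])).trans hz⟩

theorem _root_.IsNAssoc.leftLocalIdentities_one (ha : IsNAssoc n f) (hn : 2 < n)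
    (hs : ∀ i < n, ∀ c : ℕ → G, Surjective (slot f c i)) : LeftLocalIdentities n 1 f := fun a => by
  obtain ⟨z, hz⟩ := hs (n - 2) (by omega) (fun _ => a 0) (a 0)
  set p := update (fun _ => a 0) (n - 2) z
  have hp : slot f p (n - 1) (a 0) = a 0 := by
    have := slot_self (f := f) p (n - 1)
    rw [show p (n - 1) = a 0 from update_of_ne (by omega) _ _] at this
    exact this.trans hz
  refine ⟨p, fun b => ?_⟩
  obtain ⟨s, rfl⟩ := hs (n - 1) (by omega) (fun _ => a 0) b
  refine (ev_congr fun t ht => ?_).trans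
    (ha.slot_last_ev_eq_self (p := p) (w := update (fun _ => a 0) (n - 1) s) (by omega) ?_)
  · simp only [update_apply, p]
    split_ifs <;> first | rfl | omega | (congr 1; omega)
  · rwa [update_of_ne (show 0 ≠ n - 1 by omega)]

theorem _root_.IsNAryGroup.localIdentities_one (hG : IsNAryGroup n f) (hn : 2 < n) :
    LeftLocalIdentities n 1 f ∧ RightLocalIdentities n 1 f := by
  have hs : ∀ i < n, ∀ c : ℕ → G, Surjective (slot f c i) :=
    fun i hi => (hG.2 i hi).surjective_slot
  refine ⟨hG.1.leftLocalIdentities_one hn hs, (leftLocalIdentities_reverse_iff (by omega)).1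
    (hG.1.reverse.leftLocalIdentities_one hn fun i hi => ?_)⟩
  rw [forall_slot_reverse_iff Surjective hi]
  exact hs _ (by omega)

theorem _root_.IsNAssoc.isNAryGroup (ha : IsNAssoc n f) (hn : 1 < n) {k : ℕ} (hk : 1 ≤ k)
    (hkn : k < n) (hL : LeftLocalIdentities n k f) (hR : RightLocalIdentities n k f) :
    IsNAryGroup n f := by
  have hlast : ∀ c : ℕ → G, Surjective (slot f c (n - 1)) :=
    ha.surjective_slot_last (by omega) hk hL
  have h₀ : ∀ c : ℕ → G, Surjective (slot f c 0) := by
    have := ha.reverse.surjective_slot_last (by omega) hk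
      ((leftLocalIdentities_reverse_iff hkn).2 hR)
    rwa [forall_slot_reverse_iff Surjective (by omega), Nat.sub_self] at this
  have hinj₀ : ∀ c : ℕ → G, Injective (slot f c 0) := by
    have := ha.reverse.injective_slot_last hn
      (by rwa [forall_slot_reverse_iff Surjective (by omega), Nat.sub_zero])
      (by rwa [forall_slot_reverse_iff Surjective (by omega), Nat.sub_self])
    rwa [forall_slot_reverse_iff Injective (by omega), Nat.sub_self] at this
  refine ⟨ha, fun i hi => isUSolv_of_bijective_slot fun c =>
    ⟨ha.injective_slot hinj₀ (ha.injective_slot_last hn h₀ hlast) hi c,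
      ha.surjective_slot h₀ hlast hi c⟩⟩

end NAry

/-- Celakoski 1977; Dudek–Groździńska 1979.
An `n`-ary semigroup is an `n`-ary group iff for some `1 ≤ k ≤ n-2` and all
`a₁,…,a_k` there are `x_{k+1},…,x_{n-1}` and `y_{k+1},…,y_{n-1}` such that
`f(a₁,…,a_k,x_{k+1},…,x_{n-1},b) = b = f(b,y_{k+1},…,y_{n-1},a₁,…,a_k)` for all `b`. -/
theorem nary_group_iff_local_identities {G : Type*} (n : ℕ) (hn : 2 < n)
    (f : (Fin n → G) → G) (hassoc : IsNAssoc n f) :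
    IsNAryGroup n f ↔
      ∃ k : ℕ, 1 ≤ k ∧ k ≤ n - 2 ∧ ∀ a : ℕ → G, ∃ x y : ℕ → G, ∀ b : G,
        f (fun m => if (m : ℕ) < k then a (m : ℕ)
            else if (m : ℕ) < n - 1 then x (m : ℕ) else b) = b ∧
        f (fun m => if (m : ℕ) = 0 then b
            else if (m : ℕ) < n - k then y (m : ℕ) else a ((m : ℕ) - (n - k))) = b := by
  constructor
  · intro hG
    obtain ⟨hL, hR⟩ := hG.localIdentities_one hn
    refine ⟨1, le_rfl, by omega, fun a => ?_⟩
    obtain ⟨x, hx⟩ := hL a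
    obtain ⟨y, hy⟩ := hR a
    exact ⟨x, y, fun b => ⟨hx b, hy b⟩⟩
  · rintro ⟨k, hk, hkn, hid⟩
    refine hassoc.isNAryGroup (by omega) hk (by omega) (fun a => ?_) (fun a => ?_)
    · obtain ⟨x, _, h⟩ := hid a
      exact ⟨x, fun b => (h b).1⟩
    · obtain ⟨_, y, h⟩ := hid a
      exact ⟨y, fun b => (h b).2⟩
end

section
/- Let n > 2. An n-ary semigroup (G,f) is an n-ary group if and only if for some i, j with 1 ≤ i, j ≤ n−1 and for all a, b ∈ G there exist x, y ∈ G such that f(x, b,…,b, a,…,a) = b (with i−1 copies of b followed by n−i copies of a) and f(a,…,a, b,…,b, y) = b (with n−j copies of a followed by j−1 copies of b). -/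
/-! Putting `a = b` in the equation for `y` gives `v` with `f(a, …, a, v) = a`. Since the
equation for `x` writes every element as `f(w, a)`, associativity gives `f(z, a, …, a, v) = z` for
all `z`: the sequence `a, …, a, v` is right neutral. Contracting it into the block `b, …, b` of the
equation for `x`, and then contracting a window around the remaining `a`'s, solves every equation
at the first place; reversing words exchanges the two equations and solves every equation at the
last place. In an `n`-ary semigroup this suffices: solvability at both ends gives solvability at
every place, and right and left neutral sequences give every translation a left inverse. -/

open List Function

section ListModel

variable {G : Type*} {n : ℕ}

/-- The padding by `default` is never read: `f` is only ever applied to lists of length `n`. -/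
def applyList [Inhabited G] (f : (Fin n → G) → G) (l : List G) : G :=
  f fun m => l.getD m default

/-- `IsNAssoc` for words written as lists: contracting any window of length `n` in a word of
length `2n - 1` gives the same value. -/
def IsListAssoc (n : ℕ) (F : List G → G) : Prop :=
  ∀ ⦃u w v u' w' v' : List G⦄, w.length = n → w'.length = n → u.length + v.length + 1 = n →
    u ++ w ++ v = u' ++ w' ++ v' → F (u ++ F w :: v) = F (u' ++ F w' :: v')

def TranslationsAt (n : ℕ) (F : List G → G) (k : ℕ) (P : (G → G) → Prop) : Prop :=
  ∀ u v : List G, u.length = k → k + v.length + 1 = n → P fun z => F (u ++ z :: v)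

def IsRightNeutral (F : List G → G) (s : List G) : Prop := ∀ y, F (y :: s) = y

def IsLeftNeutral (F : List G → G) (s : List G) : Prop := ∀ y, F (s ++ [y]) = y

theorem applyList_eq_applyAt [Inhabited G] (f : (Fin n → G) → G) {u w : List G}
    (v : List G) (hw : w.length = n) :
    applyList f (u ++ applyList f w :: v) =
      applyAt n f (fun t => (u ++ w ++ v).getD t default) u.length := by
  unfold applyList applyAt
  congr 1
  funext m
  dsimp only
  rw [append_assoc]
  split_ifs with h₁ h₂
  · rw [getD_append _ _ _ _ h₁, getD_append _ _ _ _ h₁]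
  · rw [h₂, getD_append_right _ _ _ _ le_rfl, Nat.sub_self, getD_cons_zero]
    congr 1
    funext t
    rw [getD_append_right _ _ _ _ (by omega), getD_append _ _ _ _ (by omega)]
    simp
  · obtain ⟨k, hk⟩ : ∃ k, (m : ℕ) = u.length + k + 1 := ⟨m - u.length - 1, by omega⟩
    rw [getD_append_right _ _ _ _ (by omega), getD_append_right _ _ _ _ (by omega),
      getD_append_right _ _ _ _ (by omega), hk, show u.length + k + 1 - u.length = k + 1 by omega,
      getD_cons_succ]
    congr 1
    omega

theorem IsNAssoc.isListAssoc [Inhabited G] {f : (Fin n → G) → G} (hf : IsNAssoc n f) :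
    IsListAssoc n (applyList f) := by
  intro u w v u' w' v' hw hw' huv h
  have hlen := congrArg length h
  simp only [length_append] at hlen
  rw [applyList_eq_applyAt f v hw, applyList_eq_applyAt f v' hw', h]
  exact hf _ _ (by omega) (by omega) _

variable {F : List G → G}

theorem IsListAssoc.reverse (hF : IsListAssoc n F) : IsListAssoc n (F ∘ List.reverse) := by
  intro u w v u' w' v' hw hw' huv h
  have := hF (u := v.reverse) (w := w.reverse) (v := u.reverse) (u' := v'.reverse)
    (w' := w'.reverse) (v' := u'.reverse) (by simpa) (by simpa) (by simp; omega)
    (by simpa using congrArg List.reverse h)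
  simpa using this

theorem TranslationsAt.reverse {k k' : ℕ} {P : (G → G) → Prop} (h : TranslationsAt n F k P)
    (hk : k + k' + 1 = n) : TranslationsAt n (F ∘ List.reverse) k' P := by
  intro u v hu hv
  convert h v.reverse u.reverse (by simp; omega) (by simp; omega) using 2
  simp

theorem TranslationsAt.of_reverse {k k' : ℕ} {P : (G → G) → Prop}
    (h : TranslationsAt n (F ∘ List.reverse) k P) (hk : k + k' + 1 = n) :
    TranslationsAt n F k' P := by
  simpa [comp_assoc, reverse_involutive.comp_self] using h.reverse hk

theorem isRightNeutral_of_eq_self (hF : IsListAssoc n F) {a : G} {s : List G}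
    (hsurj : ∀ y, ∃ w : List G, w.length + 1 = n ∧ F (w ++ [a]) = y)
    (hs : s.length + 1 = n) (ha : F (a :: s) = a) : IsRightNeutral F s := by
  intro y
  obtain ⟨w, hw, rfl⟩ := hsurj y
  calc F (F (w ++ [a]) :: s) = F ([] ++ F (w ++ [a]) :: s) := rfl
    _ = F (w ++ F (a :: s) :: []) := hF (by simp; omega) (by simp; omega) (by simp; omega) (by simp)
    _ = F (w ++ [a]) := by rw [ha]

section SolvableAtEnds

variable (hF : IsListAssoc n F) (h₀ : TranslationsAt n F 0 Surjective)
  (h₁ : TranslationsAt n F (n - 1) Surjective)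
include hF h₀ h₁

theorem exists_isRightNeutral [Nonempty G] {l : List G} (hl : l.length + 2 = n) :
    ∃ τ, IsRightNeutral F (l ++ [τ]) := by
  obtain ⟨a⟩ := ‹Nonempty G›
  obtain ⟨τ, hτ⟩ := h₁ (a :: l) [] (by simp; omega) (by simp; omega) a
  refine ⟨τ, isRightNeutral_of_eq_self hF (fun y => ?_) (by simp; omega) (by simpa using hτ)⟩
  obtain ⟨x, hx⟩ := h₀ [] (l ++ [a]) rfl (by simp; omega) y
  exact ⟨x :: l, by simp; omega, by simpa using hx⟩

theorem exists_isLeftNeutral [Nonempty G] {l : List G} (hl : l.length + 2 = n) :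
    ∃ σ, IsLeftNeutral F (σ :: l) := by
  obtain ⟨σ, hσ⟩ := exists_isRightNeutral hF.reverse (h₁.reverse (by omega))
    (h₀.reverse (by omega)) (l := l.reverse) (by simpa using hl)
  exact ⟨σ, fun y => by simpa using hσ y⟩

theorem surjectiveAt {k : ℕ} : TranslationsAt n F k Surjective := by
  intro u v _ hv c
  obtain ⟨w₀, hw₀⟩ := h₀ [] (replicate u.length c ++ v) rfl (by simp; omega) c
  obtain ⟨ξ, hξ⟩ := h₁ (u ++ replicate v.length c) [] (by simp; omega) (by simp; omega) w₀
  beta_reduce at hξ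
  refine ⟨F (replicate v.length c ++ ξ :: replicate u.length c), ?_⟩
  calc F (u ++ F (replicate v.length c ++ ξ :: replicate u.length c) :: v)
      = F ([] ++ F (u ++ replicate v.length c ++ [ξ]) :: (replicate u.length c ++ v)) :=
        hF (by simp; omega) (by simp; omega) (by omega) (by simp)
    _ = c := by rw [hξ]; exact hw₀

theorem injectiveAt_zero (hn : 2 ≤ n) : TranslationsAt n F 0 Injective := by
  intro u v hu hv
  obtain rfl := length_eq_zero_iff.mp hu
  obtain ⟨l, e, rfl⟩ : ∃ l e, v = l ++ [e] := by
    rcases v.eq_nil_or_concat with rfl | ⟨l, e, rfl⟩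
    · simp at hv; omega
    · exact ⟨l, e, concat_eq_append⟩
  have : Nonempty G := ⟨e⟩
  simp only [length_append, length_singleton] at hv
  obtain ⟨τ, hτ⟩ := exists_isRightNeutral hF h₀ h₁ (l := l) (by omega)
  obtain ⟨t, ht⟩ := h₁ (e :: l) [] (by simp; omega) (by simp; omega) τ
  beta_reduce at ht
  refine LeftInverse.injective (g := fun c => F (c :: l ++ [t])) fun y => ?_
  calc F ([] ++ F ([] ++ y :: (l ++ [e])) :: (l ++ [t]))
      = F ((y :: l) ++ F (e :: l ++ [t]) :: []) :=
        hF (by simp; omega) (by simp; omega) (by simp; omega) (by simp)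
    _ = y := by rw [ht]; simpa using hτ y

theorem injectiveAt_of_injectiveAt_zero {k : ℕ} (hk : k + 2 ≤ n)
    (hinj : TranslationsAt n F 0 Injective) : TranslationsAt n F k Injective := by
  intro u v hu hv
  obtain ⟨e, v, rfl⟩ : ∃ e v', v = e :: v' := by
    cases v with
    | nil => simp at hv; omega
    | cons e v => exact ⟨e, v, rfl⟩
  have : Nonempty G := ⟨e⟩
  simp only [length_cons] at hv
  obtain ⟨σ, hσ⟩ := exists_isLeftNeutral hF h₀ h₁ (l := replicate v.length e ++ u)
    (by simp; omega)
  set t := replicate u.length e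
  -- the left neutral block `σ, e, …, e` carries the unknown from place `k` to place `0`
  have hcomp (y : G) :
      F (σ :: replicate v.length e ++ F (u ++ y :: e :: v) :: t) = F (y :: e :: v ++ t) :=
    calc _ = F ([] ++ F (σ :: (replicate v.length e ++ u) ++ [y]) :: (e :: v ++ t)) :=
          hF (by simp; omega) (by simp; omega) (by simp [t]; omega) (by simp)
      _ = _ := by rw [hσ y]; rfl
  refine Injective.of_comp (f := fun c => F (σ :: replicate v.length e ++ c :: t)) ?_
  convert hinj [] (e :: v ++ t) rfl (by simp [t]; omega) using 1
  funext y
  exact hcomp y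

theorem bijectiveAt (hn : 2 ≤ n) {k : ℕ} (hk : k < n) : TranslationsAt n F k Bijective := by
  have hinj : TranslationsAt n F k Injective := by
    by_cases hk' : k + 2 ≤ n
    · exact injectiveAt_of_injectiveAt_zero hF h₀ h₁ hk' (injectiveAt_zero hF h₀ h₁ hn)
    · exact (injectiveAt_zero hF.reverse (h₁.reverse (by omega)) (h₀.reverse (by omega))
        hn).of_reverse (by omega)
  exact fun u v hu hv => ⟨hinj u v hu hv, surjectiveAt hF h₀ h₁ u v hu hv⟩

end SolvableAtEnds

theorem exists_append_singleton_eq {p q : ℕ} (hn : p + q + 2 = n)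
    (hL : ∀ a b, ∃ x, F (x :: replicate p b ++ replicate (q + 1) a) = b) (a y : G) :
    ∃ w : List G, w.length + 1 = n ∧ F (w ++ [a]) = y := by
  obtain ⟨x, hx⟩ := hL a y
  exact ⟨x :: replicate p y ++ replicate q a, by simp; omega, by simpa [replicate_succ'] using hx⟩

theorem exists_prefix_surjective (hF : IsListAssoc n F) {p q : ℕ} (hn : p + q + 2 = n)
    (hL : ∀ a b, ∃ x, F (x :: replicate p b ++ replicate (q + 1) a) = b) {a v : G}
    (hN : IsRightNeutral F (replicate (p + q) a ++ [v])) :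
    ∃ P : List G, P.length = p ∧ ∀ c, Surjective fun z => F (z :: P ++ replicate (q + 1) c) := by
  cases p with
  | zero => exact ⟨[], rfl, fun c y => by simpa using hL c y⟩
  | succ p =>
    refine ⟨replicate p a ++ [v], by simp, fun c y => ?_⟩
    obtain ⟨x, hx⟩ := hL c y
    refine ⟨F (x :: replicate (p + 1) y ++ replicate (q + 1) a), ?_⟩
    calc F ([] ++ F (x :: replicate (p + 1) y ++ replicate (q + 1) a) ::
          (replicate p a ++ [v] ++ replicate (q + 1) c))
        = F ((x :: replicate p y) ++ F (y :: (replicate (p + 1 + q) a ++ [v])) ::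
            replicate (q + 1) c) := by
          refine hF (by simp; omega) (by simp; omega) (by simp; omega) ?_
          rw [show p + 1 + q = (q + 1) + p by omega, ← replicate_append_replicate (n := q + 1)]
          simp [replicate_succ']
      _ = y := by rw [hN y]; simpa [replicate_succ'] using hx

theorem surjectiveAt_zero (hF : IsListAssoc n F) {p q : ℕ} (hn : p + q + 2 = n)
    (hL : ∀ a b, ∃ x, F (x :: replicate p b ++ replicate (q + 1) a) = b)
    (hR : ∀ a, ∃ v, F (replicate (n - 1) a ++ [v]) = a) : TranslationsAt n F 0 Surjective := by
  intro u d hu hd b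
  obtain rfl := length_eq_zero_iff.mp hu
  obtain ⟨v, hv⟩ := hR b
  have hN : IsRightNeutral F (replicate (p + q) b ++ [v]) := by
    refine isRightNeutral_of_eq_self hF (exists_append_singleton_eq hn hL b) (by simp; omega) ?_
    rwa [show n - 1 = p + q + 1 by omega, replicate_succ] at hv
  obtain ⟨P, hP, hPsurj⟩ := exists_prefix_surjective hF hn hL hN
  obtain ⟨z, hz⟩ := hPsurj (F (b :: d)) b
  refine ⟨F (z :: P ++ replicate q (F (b :: d)) ++ [b]), ?_⟩
  calc F ([] ++ F (z :: P ++ replicate q (F (b :: d)) ++ [b]) :: d)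
      = F ((z :: P ++ replicate q (F (b :: d))) ++ F (b :: d) :: []) :=
        hF (by simp; omega) (by simp; omega) (by simp; omega) (by simp)
    _ = b := by simpa [replicate_succ'] using hz

theorem bijectiveAt_of_solvable_special (hF : IsListAssoc n F) {i j : ℕ} (hi₁ : 1 ≤ i)
    (hi₂ : i ≤ n - 1) (hj₁ : 1 ≤ j) (hj₂ : j ≤ n - 1)
    (hL : ∀ a b, ∃ x, F (x :: replicate (i - 1) b ++ replicate (n - i) a) = b)
    (hR : ∀ a b, ∃ y, F (replicate (n - j) a ++ replicate (j - 1) b ++ [y]) = b) {k : ℕ}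
    (hk : k < n) : TranslationsAt n F k Bijective := by
  have hR' (a : G) : ∃ y, F (replicate (n - 1) a ++ [y]) = a := by
    obtain ⟨y, hy⟩ := hR a a
    rw [replicate_append_replicate, show n - j + (j - 1) = n - 1 by omega] at hy
    exact ⟨y, hy⟩
  have hL' (a : G) : ∃ x, (F ∘ List.reverse) (replicate (n - 1) a ++ [x]) = a := by
    obtain ⟨x, hx⟩ := hL a a
    rw [cons_append, replicate_append_replicate, show i - 1 + (n - i) = n - 1 by omega] at hx
    exact ⟨x, by simpa using hx⟩
  have h₀ := surjectiveAt_zero hF (p := i - 1) (q := n - i - 1) (by omega)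
    (by simpa only [show n - i - 1 + 1 = n - i by omega] using hL) hR'
  have h₁ := (surjectiveAt_zero hF.reverse (p := j - 1) (q := n - j - 1) (by omega)
    (fun a b => by simpa [show n - j - 1 + 1 = n - j by omega] using hR a b) hL').of_reverse
    (k' := n - 1) (by omega)
  exact bijectiveAt hF h₀ h₁ (by omega) hk

section Operation

variable [Inhabited G] {f : (Fin n → G) → G}

theorem eq_applyList_cons_replicate {i : ℕ} (hi : 1 ≤ i) (x a b : G) :
    f (fun m => if (m : ℕ) = 0 then x else if (m : ℕ) < i then b else a) =
      applyList f (x :: replicate (i - 1) b ++ replicate (n - i) a) := by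
  unfold applyList
  congr 1
  funext ⟨m, hm⟩
  cases m with
  | zero => simp
  | succ m =>
    simp [getD_eq_getElem?_getD, getElem?_append, getElem?_replicate]
    split_ifs <;> first | rfl | omega

theorem eq_applyList_replicate_append_singleton {j : ℕ} (hj₁ : 1 ≤ j) (hj₂ : j ≤ n) (y a b : G) :
    f (fun m => if (m : ℕ) < n - j then a else if (m : ℕ) < n - 1 then b else y) =
      applyList f (replicate (n - j) a ++ replicate (j - 1) b ++ [y]) := by
  unfold applyList
  congr 1
  funext m
  have := m.isLt
  simp [getD_eq_getElem?_getD, getElem?_append, getElem?_replicate]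
  split_ifs <;> first | rfl | omega | simp [show (m : ℕ) - (n - j) - (j - 1) = 0 by omega]

theorem applyList_take_append_cons_drop (x : Fin n → G) {k : ℕ} (hk : k < n) (z : G) :
    applyList f ((ofFn x).take k ++ z :: (ofFn x).drop (k + 1)) =
      f (fun m => if (m : ℕ) = k then z else x m) := by
  unfold applyList
  congr 1
  funext m
  have hset : (ofFn x).take k ++ z :: (ofFn x).drop (k + 1) = (ofFn x).set k z := by
    rw [set_eq_take_append_cons_drop, if_pos (by simpa)]
  rw [hset]
  simp [getD_eq_getElem?_getD, getElem_set, eq_comm]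

theorem isUSolv_of_bijectiveAt {k : ℕ} (hk : k < n)
    (h : TranslationsAt n (applyList f) k Bijective) : IsUSolv n f k := by
  intro x c
  simpa only [applyList_take_append_cons_drop x hk] using
    (h ((ofFn x).take k) ((ofFn x).drop (k + 1)) (by simp; omega) (by simp; omega)).existsUnique c

end Operation

end ListModel

/-- Gal'mak, 1995.
An `n`-ary semigroup is an `n`-ary group iff for some `1 ≤ i, j ≤ n-1` and all `a, b`
there exist `x, y` with `f(x, b^{(i-1)}, a^{(n-i)}) = b` and `f(a^{(n-j)}, b^{(j-1)}, y) = b`. -/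
theorem nary_group_iff_galmak {G : Type*} (n : ℕ) (hn : 2 < n)
    (f : (Fin n → G) → G) (hassoc : IsNAssoc n f) :
    IsNAryGroup n f ↔
      ∃ i j : ℕ, 1 ≤ i ∧ i ≤ n - 1 ∧ 1 ≤ j ∧ j ≤ n - 1 ∧
        ∀ a b : G, ∃ x y : G,
          f (fun m => if (m : ℕ) = 0 then x else if (m : ℕ) < i then b else a) = b ∧
          f (fun m => if (m : ℕ) < n - j then a else if (m : ℕ) < n - 1 then b else y) = b := by
  constructor
  · rintro ⟨-, hsolv⟩
    refine ⟨1, 1, le_rfl, by omega, le_rfl, by omega, fun a b => ?_⟩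
    obtain ⟨x, hx, -⟩ := hsolv 0 (by omega) (fun _ => a) b
    obtain ⟨y, hy, -⟩ := hsolv (n - 1) (by omega) (fun _ => a) b
    refine ⟨x, y, ?_, ?_⟩
    · convert hx using 2
      funext m
      split_ifs <;> first | rfl | omega
    · convert hy using 2
      funext m
      have := m.isLt
      split_ifs <;> first | rfl | omega
  · rintro ⟨i, j, hi₁, hi₂, hj₁, hj₂, h⟩
    refine ⟨hassoc, fun k hk x c => ?_⟩
    let _ : Inhabited G := ⟨c⟩
    refine isUSolv_of_bijectiveAt hk (bijectiveAt_of_solvable_special hassoc.isListAssoc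
      hi₁ hi₂ hj₁ hj₂ (fun a b => ?_) (fun a b => ?_) hk) x c
    · obtain ⟨x, -, hx, -⟩ := h a b
      exact ⟨x, by rwa [← eq_applyList_cons_replicate hi₁]⟩
    · obtain ⟨-, y, -, hy⟩ := h a b
      exact ⟨y, by rwa [← eq_applyList_replicate_append_singleton hj₁ (by omega)]⟩
end

section
/- Every infinitary group has exactly one element. That is, if G is a nonempty set and f : G^ℕ → G is an infinitary operation which is associative and such that for every position k, every x_0 ∈ G and every sequence (x_m) in G there is a unique z ∈ G with f(x_1,…,x_{k−1}, z, x_{k+1}, x_{k+2},…) = x_0, then G is a singleton. -/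
open Stream'

section Infinitary

variable {G : Type*}

/-- `splice f i x y = (x 0, …, x (i-1), f (x i, x (i+1), …), y 0, y 1, …)`. -/
def splice (f : (ℕ → G) → G) (i : ℕ) (x y : ℕ → G) : ℕ → G :=
  fun m => if m < i then x m else if m = i then f (fun t => x (i + t)) else y (m - i - 1)

def IsInfAssoc (f : (ℕ → G) → G) : Prop :=
  ∀ (i j : ℕ) (x y : ℕ → G), f (splice f i x y) = f (splice f j x y)

theorem splice_zero (f : (ℕ → G) → G) (x y : Stream' G) : splice f 0 x y = f x :: y := by
  funext m
  cases m <;> simp [splice, Stream'.cons]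

theorem splice_succ (f : (ℕ → G) → G) (i : ℕ) (a : G) (x y : Stream' G) :
    splice f (i + 1) (a :: x) y = a :: splice f i x y := by
  funext m
  cases m <;> simp [splice, Stream'.cons, Nat.add_right_comm i 1]

theorem update_zero_eq_cons (s : ℕ → G) (z : G) : Function.update s 0 z = z :: tail s := by
  funext m
  cases m <;> rfl

namespace IsInfAssoc

variable {f : (ℕ → G) → G} (hf : IsInfAssoc f)
include hf

theorem apply_apply_cons (a : G) (x y : Stream' G) :
    f (f (a :: x) :: y) = f (a :: f x :: y) := by
  simpa only [splice_succ, splice_zero] using hf 0 1 (a :: x) y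

theorem apply_cons_apply_cons (z a : G) (x y : Stream' G) :
    f (z :: f (a :: x) :: y) = f (z :: a :: f x :: y) := by
  simpa only [splice_succ, splice_zero] using hf 1 2 (z :: a :: x) y

theorem apply_cons (hsolv : ∀ (x : ℕ → G) (x₀ : G), ∃ z, f (Function.update x 1 z) = x₀)
    (z : G) (y : Stream' G) : f (z :: y) = f y := by
  set e := f (const z)
  obtain ⟨w, hw⟩ := hsolv (fun _ => e) (head y)
  set s := Function.update (fun _ => e) 1 w
  have hs : e :: tail s = s := by
    funext m
    rcases m with _ | m
    · simp [s, Stream'.cons]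
    · rfl
  -- `const z = z :: const z`, so `e` absorbs one leading `z`.
  have hz := hf.apply_apply_cons z (const z) (f (tail s) :: tail y)
  rw [← const_eq] at hz
  calc f (z :: y) = f (z :: f (e :: tail s) :: tail y) := by rw [hs, hw, Stream'.eta]
    _ = f (z :: e :: f (tail s) :: tail y) := hf.apply_cons_apply_cons z e _ _
    _ = f (e :: f (tail s) :: tail y) := hz.symm
    _ = f (f (e :: tail s) :: tail y) := (hf.apply_apply_cons _ _ _).symm
    _ = f y := by rw [hs, hw, Stream'.eta]

end IsInfAssoc

end Infinitary

/-- Every infinitary group has exactly one element. -/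
theorem infinitary_group_subsingleton {G : Type*} [Nonempty G] (f : (ℕ → G) → G)
    (hassoc : ∀ (i j : ℕ) (x y : ℕ → G),
      f (fun m => if m < i then x m
          else if m = i then f (fun t => x (i + t)) else y (m - i - 1)) =
      f (fun m => if m < j then x m
          else if m = j then f (fun t => x (j + t)) else y (m - j - 1)))
    (hsolv : ∀ (k : ℕ) (x : ℕ → G) (x₀ : G), ∃! z : G, f (Function.update x k z) = x₀) :
    ∃ a : G, ∀ b : G, b = a := by
  obtain ⟨a⟩ := ‹Nonempty G›
  have hf : IsInfAssoc f := hassoc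
  have solves (z : G) : f (Function.update (fun _ => a) 0 z) = f (const a) := by
    rw [update_zero_eq_cons]
    exact hf.apply_cons (fun x x₀ => (hsolv 1 x x₀).exists) z (const a)
  exact ⟨a, fun b => (hsolv 0 (fun _ => a) (f (const a))).unique (solves b) (solves a)⟩
end

section
/- Let n > 2, let (G,f) be an n-ary group, and let x ∈ G have finite n-ary order ord_n(x). Then ord_n(x) = ord_n(x̄) if and only if ord_n(x) and n−2 are relatively prime. -/
/-- `n`-ary powers: `x^{<0>} = x`, `x^{<k+1>} = f(x,…,x, x^{<k>})` (`n-1` copies of `x`). -/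
def nPow {G : Type*} (n : ℕ) (f : (Fin n → G) → G) (x : G) : ℕ → G
  | 0 => x
  | k + 1 => f (fun m => if (m : ℕ) = n - 1 then nPow n f x k else x)

/-! With `T y = f(x,…,x,y)` we have `x^<k> = Tᵏ x`, so `ord_n(x)` is the minimal period `d` of
`x` under `T`. Associativity yields the power law `f(x^<e₁>,…,x^<eₙ>) = x^<e₁+⋯+eₙ+1>`, whence
`x̄ = x^<d-1>` and `x̄^<k> = x^<d-1+kA>` with `A = (n-1)(d-1)+1`. Thus `ord_n(x̄)` is the minimal
period of `x` under `Tᴬ`, i.e. `d / gcd(d, A)`, and `gcd(d, A) = gcd(d, n-2)` as `A ≡ 2-n (mod d)`. -/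

open Function Finset

theorem Function.IsPeriodicPt.iterate_add_eq_iterate_iff {α : Type*} {g : α → α} {x : α} {m : ℕ}
    (h : IsPeriodicPt g (m + 1) x) (j : ℕ) : g^[m + j] x = g^[m] x ↔ IsPeriodicPt g j x := by
  refine ⟨fun hj => ?_, fun hj => by rw [iterate_add_apply, hj.eq]⟩
  calc g^[j] x = g^[j] (g^[m + 1] x) := by rw [h.eq]
    _ = g (g^[m + j] x) := by rw [← iterate_add_apply, ← iterate_succ_apply' g]; congr 1; omega
    _ = x := by rw [hj, ← iterate_succ_apply' g, h.eq]

theorem Nat.gcd_mul_pred_add_one {d m : ℕ} (hd : 0 < d) (hm : 0 < m) :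
    d.gcd (m * (d - 1) + 1) = d.gcd (m - 1) := by
  obtain ⟨d, rfl⟩ := Nat.exists_eq_add_one_of_ne_zero hd.ne'
  obtain ⟨m, rfl⟩ := Nat.exists_eq_add_one_of_ne_zero hm.ne'
  rw [add_tsub_cancel_right, add_tsub_cancel_right, show (m + 1) * d + 1 = m * d + (d + 1) by ring,
    Nat.gcd_add_self_right,
    (Nat.coprime_self_add_right.2 (Nat.coprime_one_right d)).gcd_mul_right_cancel_right]

section NAryPowers

variable {G : Type*} {n : ℕ} {f : (Fin n → G) → G}

variable (n f) in
def powStep (x y : G) : G :=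
  f fun m => if (m : ℕ) = n - 1 then y else x

theorem nPow_succ (x : G) (k : ℕ) : nPow n f x (k + 1) = powStep n f x (nPow n f x k) := rfl

theorem nPow_eq_iterate (x : G) (k : ℕ) : nPow n f x k = (powStep n f x)^[k] x := by
  induction k with
  | zero => rfl
  | succ k ih => rw [iterate_succ_apply', ← ih, nPow_succ]

theorem sInf_nPow_eq_minimalPeriod (x : G) :
    sInf {k : ℕ | 0 < k ∧ nPow n f x k = x} = minimalPeriod (powStep n f x) x := by
  simp only [nPow_eq_iterate]
  exact minimalPeriod_eq_sInf_n_pos_IsPeriodicPt.symm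

theorem IsUSolv.injective {i : ℕ} (h : IsUSolv n f i) (v : Fin n → G) :
    Injective fun z => f fun m => if (m : ℕ) = i then z else v m := by
  intro z z' hz
  obtain ⟨u, -, hu⟩ := h v (f fun m => if (m : ℕ) = i then z' else v m)
  exact (hu z hz).trans (hu z' rfl).symm

theorem IsAssocAt.update_powStep {i : ℕ} (h : IsAssocAt n f i (n - 1)) {x : G} {v : ℕ → G}
    (hv : ∀ j < i, v j = x) (z : G) :
    f (fun m => update v i (powStep n f x z) m) = powStep n f x (f fun m => update v i z m) := by
  -- `w = (x,…,x, z, v (i+1), v (i+2), …)` with `i + n - 1` leading `x`s: bracketing `w` at `i`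
  -- gives the left side, bracketing it at `n - 1` the right side.
  set w : ℕ → G := fun t =>
    if t < i + (n - 1) then x else if t = i + (n - 1) then z else v (t - (n - 1))
  calc f (fun m => update v i (powStep n f x z) m) = applyAt n f w i := ?_
    _ = applyAt n f w (n - 1) := h w
    _ = _ := ?_
  all_goals
    unfold applyAt powStep
    congr 1; funext j
    simp only [w, update_apply]
    split_ifs <;> (try congr 1; funext t; split_ifs) <;>
      first | rfl | omega | exact hv _ (by omega) | exact (hv _ (by omega)).symm | congr 1; omega

theorem IsNAssoc.apply_nPow (h : IsNAssoc n f) (x : G) (e : ℕ → ℕ) :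
    f (fun m => nPow n f x (e m)) = nPow n f x (∑ t ∈ range n, e t + 1) := by
  induction hs : ∑ t ∈ range n, e t using Nat.strong_induction_on generalizing e with
  | _ s ih =>
  by_cases he : ∃ t < n, e t ≠ 0
  · classical
    set i := Nat.find he
    obtain ⟨hi, hei⟩ := Nat.find_spec he
    obtain ⟨a, ha⟩ := Nat.exists_eq_add_one_of_ne_zero hei
    have hprefix : ∀ j < i, nPow n f x (e j) = x := fun j hj => by
      rw [show e j = 0 by simpa [hj.trans hi] using Nat.find_min he hj]; rfl
    have hsum : ∑ t ∈ range n, update e i a t + 1 = s := by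
      rw [sum_update_of_mem (mem_range.2 hi), ← hs, ← add_sum_erase _ _ (mem_range.2 hi),
        sdiff_singleton_eq_erase, ha]
      omega
    calc f (fun m => nPow n f x (e m))
        = f (fun m => update (fun t => nPow n f x (e t)) i (powStep n f x (nPow n f x a)) m) := by
          rw [← nPow_succ, ← ha, update_eq_self]
      _ = powStep n f x (f fun m => update (fun t => nPow n f x (e t)) i (nPow n f x a) m) :=
          IsAssocAt.update_powStep (h i (n - 1) hi (by omega)) hprefix _
      _ = powStep n f x (f fun m => nPow n f x (update e i a m)) := by
          congr 2; funext m; rw [update_apply, update_apply]; split_ifs <;> rfl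
      _ = nPow n f x (s + 1) := by
          rw [ih _ (by omega) (update e i a) rfl, hsum, nPow_succ]
  · push Not at he
    have hzero : s = 0 := hs ▸ sum_eq_zero fun t ht => he t (mem_range.1 ht)
    rw [hzero, nPow_succ]
    unfold powStep
    simp only [he _ (Fin.is_lt _), nPow, ite_self]

theorem IsNAssoc.nPow_nPow (h : IsNAssoc n f) (hn : 0 < n) (x : G) (a k : ℕ) :
    nPow n f (nPow n f x a) k = nPow n f x (a + ((n - 1) * a + 1) * k) := by
  induction k with
  | zero => simp [nPow]
  | succ k ih =>
    have hsum : ∑ t ∈ range n, update (fun _ => a) (n - 1) (a + ((n - 1) * a + 1) * k) t + 1 =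
        a + ((n - 1) * a + 1) * (k + 1) := by
      rw [sum_update_of_mem (mem_range.2 (by omega)), sum_const, card_sdiff_of_subset (by simp [hn]),
        card_range, card_singleton, smul_eq_mul]
      ring
    calc nPow n f (nPow n f x a) (k + 1)
        = f fun m => nPow n f x (update (fun _ => a) (n - 1) (a + ((n - 1) * a + 1) * k) m) := by
          rw [nPow_succ, ih]; unfold powStep; congr 1; funext m
          rw [update_apply]; split_ifs <;> rfl
      _ = _ := by rw [h.apply_nPow, hsum]

theorem IsSkewOf.eq_nPow_pred {bar : G → G} (hbar : IsSkewOf n f bar) (hU : IsUSolv n f (n - 1))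
    {x : G} {d : ℕ} (hd : 0 < d) (hx : nPow n f x d = x) : bar x = nPow n f x (d - 1) :=
  hU.injective (fun _ => x) <| show powStep n f x (bar x) = powStep n f x (nPow n f x (d - 1)) by
    rw [← nPow_succ, Nat.sub_add_cancel hd, hx]; exact hbar x

end NAryPowers

/-- I.M. Dudek–W.A. Dudek, 1981.
If `x` has finite `n`-ary order, then `ord_n(x) = ord_n(x̄)` iff `ord_n(x)` and `n-2`
are relatively prime. -/
theorem order_eq_order_skew_iff_coprime {G : Type*} (n : ℕ) (hn : 2 < n)
    (f : (Fin n → G) → G) (hG : IsNAryGroup n f)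
    (bar : G → G) (hbar : IsSkewOf n f bar) (x : G)
    (hfin : ∃ k : ℕ, 0 < k ∧ nPow n f x k = x) :
    sInf {k : ℕ | 0 < k ∧ nPow n f x k = x} =
      sInf {k : ℕ | 0 < k ∧ nPow n f (bar x) k = bar x} ↔
    Nat.Coprime (sInf {k : ℕ | 0 < k ∧ nPow n f x k = x}) (n - 2) := by
  obtain ⟨hassoc, hsolv⟩ := hG
  obtain ⟨k, hk, hxk⟩ := hfin
  set T := powStep n f x
  rw [sInf_nPow_eq_minimalPeriod]
  set d := minimalPeriod T x
  have hd : 0 < d := IsPeriodicPt.minimalPeriod_pos hk ((nPow_eq_iterate x k).symm.trans hxk)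
  have hT : IsPeriodicPt T (d - 1 + 1) x := by
    rw [Nat.sub_add_cancel hd]; exact isPeriodicPt_minimalPeriod T x
  have hbar_x : bar x = nPow n f x (d - 1) :=
    hbar.eq_nPow_pred (hsolv _ (by omega)) hd ((nPow_eq_iterate x d).trans iterate_minimalPeriod)
  have hbar_pow (k : ℕ) :
      nPow n f (bar x) k = bar x ↔ IsPeriodicPt T^[(n - 1) * (d - 1) + 1] k x := by
    rw [hbar_x, hassoc.nPow_nPow (by omega), nPow_eq_iterate, nPow_eq_iterate, IsPeriodicPt,
      IsFixedPt, ← iterate_mul]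
    exact hT.iterate_add_eq_iterate_iff _
  have hord_bar : sInf {k | 0 < k ∧ nPow n f (bar x) k = bar x} = d / d.gcd (n - 2) := by
    simp_rw [hbar_pow]
    rw [← minimalPeriod_eq_sInf_n_pos_IsPeriodicPt, minimalPeriod_iterate_eq_div_gcd (by omega),
      Nat.gcd_mul_pred_add_one hd (by omega), Nat.sub_sub]
  rw [hord_bar, eq_comm, Nat.div_eq_self, Nat.Coprime]
  simp [hd.ne']
end

section
/- Let n > 2. Every n-ary group ⟨φ,b⟩-derived from the infinite cyclic group (ℤ,+) is isomorphic either to the n-ary group (ℤ, f_a) for some integer a with 0 ≤ a ≤ n−2, where f_a(x_1,…,x_n) = x_1 + x_2 + … + x_n + a, or, when n is odd, to the n-ary group (ℤ, g_{−1}), where g_{−1}(x_1,…,x_n) = x_1 − x_2 + x_3 − x_4 + … + x_n. -/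
theorem Int.eq_mul_left_of_map_add {φ : ℤ → ℤ} (hφ : ∀ x y, φ (x + y) = φ x + φ y) :
    φ = (φ 1 * ·) := by
  funext x
  simpa [mul_comm] using AddMonoidHom.apply_int ℤ (.mk' φ hφ) x

theorem exists_bijective_conj_sum_add_eq_sum_add (n : ℕ) (hn : 2 ≤ n) (b : ℤ) :
    ∃ a : ℕ, a ≤ n - 2 ∧ ∃ h : ℤ → ℤ, Function.Bijective h ∧
      ∀ x : Fin n → ℤ, h (∑ j, x j + b) = ∑ j, h (x j) + a := by
  have hm : (0 : ℤ) < n - 1 := by omega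
  obtain ⟨a, ha⟩ := Int.eq_ofNat_of_zero_le (Int.emod_nonneg b hm.ne')
  have ha_lt : (a : ℤ) < n - 1 := ha ▸ Int.emod_lt_of_pos b hm
  refine ⟨a, by omega, (· + b / (n - 1)), (Equiv.addRight _).bijective, fun x => ?_⟩
  have hb := Int.mul_ediv_add_emod b (n - 1)
  simp only [Finset.sum_add_distrib, Finset.sum_const, Finset.card_univ, Fintype.card_fin,
    nsmul_eq_mul]
  linear_combination (-1 : ℤ) * hb + ha

theorem nary_group_on_int_classification_general (n : ℕ) (hn : 2 < n)
    (φ : ℤ → ℤ) (b : ℤ)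
    (hφadd : ∀ x y : ℤ, φ (x + y) = φ x + φ y)
    (hφb : φ b = b) (hφn : ∀ x : ℤ, φ^[n - 1] x = b + x - b)
    (f : (Fin n → ℤ) → ℤ)
    (hf : ∀ x : Fin n → ℤ, f x = (∑ j : Fin n, φ^[(j : ℕ)] (x j)) + b) :
    (∃ a : ℕ, a ≤ n - 2 ∧ ∃ h : ℤ → ℤ, Function.Bijective h ∧
      ∀ x : Fin n → ℤ, h (f x) = (∑ j : Fin n, h (x j)) + (a : ℤ)) ∨
    (Odd n ∧ ∃ h : ℤ → ℤ, Function.Bijective h ∧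
      ∀ x : Fin n → ℤ, h (f x) = ∑ j : Fin n, (-1 : ℤ) ^ (j : ℕ) * h (x j)) := by
  obtain ⟨c, rfl⟩ : ∃ c, φ = (c * ·) := ⟨φ 1, Int.eq_mul_left_of_map_add hφadd⟩
  simp only [mul_left_iterate] at hf hφn
  have hc : c ^ (n - 1) = 1 := by simpa using hφn 1
  rcases (pow_eq_one_iff_of_ne_zero (by omega)).1 hc with rfl | ⟨rfl, heven⟩
  · left
    obtain ⟨a, ha, h, hbij, hh⟩ := exists_bijective_conj_sum_add_eq_sum_add n hn.le b
    exact ⟨a, ha, h, hbij, fun x => by simpa [hf] using hh x⟩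
  · right
    have hb : b = 0 := by simp only at hφb; omega
    refine ⟨Nat.sub_add_cancel (by omega : 1 ≤ n) ▸ heven.add_one, id, Function.bijective_id,
      fun x => ?_⟩
    simp [hf, hb]

/-- Dudek–Głazek, 2006.
Every `n`-ary group `⟨φ,b⟩`-derived from `(ℤ,+)` is isomorphic to `(ℤ, f_a)` for some
`0 ≤ a ≤ n-2`, or, when `n` is odd, to `(ℤ, g₋₁)`. -/
theorem nary_group_on_int_classification (n : ℕ) (hn : 2 < n)
    (φ : ℤ → ℤ) (b : ℤ)
    (hφbij : Function.Bijective φ) (hφadd : ∀ x y : ℤ, φ (x + y) = φ x + φ y)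
    (hφb : φ b = b) (hφn : ∀ x : ℤ, φ^[n - 1] x = b + x - b)
    (f : (Fin n → ℤ) → ℤ)
    (hf : ∀ x : Fin n → ℤ, f x = (∑ j : Fin n, φ^[(j : ℕ)] (x j)) + b) :
    (∃ a : ℕ, a ≤ n - 2 ∧ ∃ h : ℤ → ℤ, Function.Bijective h ∧
      ∀ x : Fin n → ℤ, h (f x) = (∑ j : Fin n, h (x j)) + (a : ℤ)) ∨
    (Odd n ∧ ∃ h : ℤ → ℤ, Function.Bijective h ∧
      ∀ x : Fin n → ℤ, h (f x) = ∑ j : Fin n, (-1 : ℤ) ^ (j : ℕ) * h (x j)) :=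
  nary_group_on_int_classification_general n hn φ b hφadd hφb hφn f hf
end

section
/- Let n > 2, let (G,f) be an n-ary group, let V be a complex vector space, and let Π^L be a left bi-element representation of (G,f) in V. Then Π^L is uniquely determined by two elements: for all a_1,…,a_{n−1} ∈ G and every b ∈ G there exists c ∈ G such that Π^L(a_1,…,a_{n−1}) = Π^L(b,…,b,c) (with n−2 copies of b). -/
section BiElementRepresentation

variable {G : Type*} {n : ℕ} {M : Type*} [MulOneClass M]

/-- Composing on the right with `P(b,…,b, bar b) = 1` shows that `P a` depends only on
`f(a₁,…,a_{n-1}, b)`. -/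
theorem birep_eq_of_apply_append_eq (hn : 2 < n) (f : (Fin n → G) → G) (bar : G → G)
    (P : (Fin (n - 1) → G) → M)
    (hcomp : ∀ a b : Fin (n - 1) → G,
      P a * P b = P (fun m => if (m : ℕ) = 0
        then f (fun i => if h : (i : ℕ) < n - 1 then a ⟨(i : ℕ), h⟩ else b ⟨0, by lia⟩)
        else b m))
    (hid : ∀ a : G, P (fun m => if (m : ℕ) = n - 2 then bar a else a) = 1)
    {a a' : Fin (n - 1) → G} {b : G}
    (h : f (fun i => if h : (i : ℕ) < n - 1 then a ⟨(i : ℕ), h⟩ else b) =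
      f (fun i => if h : (i : ℕ) < n - 1 then a' ⟨(i : ℕ), h⟩ else b)) :
    P a = P a' := by
  have hb : (if (0 : ℕ) = n - 2 then bar b else b) = b := if_neg (by omega)
  calc P a = P a * P (fun m => if (m : ℕ) = n - 2 then bar b else b) := by rw [hid, mul_one]
    _ = P a' * P (fun m => if (m : ℕ) = n - 2 then bar b else b) := by
      simp only [hcomp, hb, h]
    _ = P a' := by rw [hid, mul_one]

theorem append_const_update_eq (hn : 2 < n) (b c : G) :
    (fun i : Fin n => if h : (i : ℕ) < n - 1 then
        (fun m : Fin (n - 1) => if (m : ℕ) = n - 2 then c else b) ⟨(i : ℕ), h⟩ else b) =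
      fun i : Fin n => if (i : ℕ) = n - 2 then c else b := by
  funext i
  dsimp only
  split_ifs <;> first | rfl | omega

end BiElementRepresentation

/-- cf. Borowiec–Dudek–Duplij.
A left bi-element representation of an `n`-ary group is determined by two elements:
`Π^L(a₁,…,a_{n-1}) = Π^L(b,…,b,c)` for some `c`. -/
theorem left_birepresentation_two_elements {G : Type*} (n : ℕ) (hn : 2 < n)
    (f : (Fin n → G) → G) (hG : IsNAryGroup n f)
    (bar : G → G)
    (V : Type*) [AddCommGroup V] [Module ℂ V]
    (P : (Fin (n - 1) → G) → Module.End ℂ V)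
    (hcomp : ∀ a b : Fin (n - 1) → G,
      P a * P b = P (fun m => if (m : ℕ) = 0
        then f (fun i => if h : (i : ℕ) < n - 1 then a ⟨(i : ℕ), h⟩ else b ⟨0, by omega⟩)
        else b m))
    (hid : ∀ a : G, P (fun m => if (m : ℕ) = n - 2 then bar a else a) = 1) :
    ∀ (a : Fin (n - 1) → G) (b : G), ∃ c : G,
      P a = P (fun m => if (m : ℕ) = n - 2 then c else b) := by
  intro a b
  obtain ⟨c, hc, -⟩ := hG.2 (n - 2) (by omega) (fun _ => b)
    (f fun i => if h : (i : ℕ) < n - 1 then a ⟨(i : ℕ), h⟩ else b)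
  refine ⟨c, birep_eq_of_apply_append_eq hn f bar P hcomp hid (b := b) ?_⟩
  rw [append_const_update_eq hn]
  exact hc.symm
end
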